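/- Let s ≥ 1 and N = (s+1)(s+2)/2, let c ∈ ℝ^s have all entries nonzero, and let h₁,…,h_K ∈ ℝ[z₁,…,z_s] with each h_k of the form h_k(z) = z_{a_k} z_{b_k} − c_{a_k} c_{b_k} for indices a_k, b_k ∈ {0,1,…,s} (with the convention z₀ := 1 and c₀ := 1). Suppose that for each i ∈ {1,…,s} there exist polynomials λ^{(i)}₁,…,λ^{(i)}_K of total degree at most 1 with z_i − c_i = Σ_{k=1}^K λ^{(i)}_k h_k. Let C ∈ ℝ^{K̄×K} be such that Cᵀ C is invertible, and set h̄(z) := C h(z). Then there exist a positive semidefinite matrix Q ∈ ℝ^{N×N} with rank Q = N − 1 and a positive semidefinite matrix Ū ∈ ℝ^{K̄N×K̄N} such that for all z ∈ ℝ^s: u₂(z)ᵀ Q u₂(z) − u₂(c)ᵀ Q u₂(c) = (h̄(z) ⊗ u₂(z))ᵀ Ū (h̄(z) ⊗ u₂(z)). -/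

import Mathlib

open Matrix

noncomputable section

/-- Index set for the monomials of degree at most `2` in `s` variables: pairs
`(i, j)` with `i ≤ j` in `Fin (s+1)`, where index `0` stands for the constant `1`.
Its cardinality is `N = (s+1)(s+2)/2`. -/
abbrev MonIdx (s : ℕ) := {p : Fin (s + 1) × Fin (s + 1) // p.1 ≤ p.2}

/-- The index of the constant monomial `1` (the "first" entry of `u₂`). -/
def idx1 (s : ℕ) : MonIdx s := ⟨(0, 0), le_refl _⟩

/-- Extended variable vector: `extv z 0 = 1` and `extv z (i+1) = z i`. -/
def extv {s : ℕ} (z : Fin s → ℝ) : Fin (s + 1) → ℝ := Fin.cons 1 z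

/-- `u₂ z` : the vector of all monomials of degree at most `2` in `z`;
its entry at `⟨(i, j), _⟩` is `z_i z_j` (with the convention `z_0 = 1`). -/
def u2 {s : ℕ} (z : Fin s → ℝ) : MonIdx s → ℝ := fun p => extv z p.1.1 * extv z p.1.2

/-- `E^r` : the diagonal matrix whose `(r, r)` entry is `1` and all others are `0`. -/
def Emat {s : ℕ} (r : MonIdx s) : Matrix (MonIdx s) (MonIdx s) ℝ :=
  Matrix.single r r 1

/-- `Q^r` : the symmetric matrix whose only nonzero entries are
`[Q^r]₁₁ = ((u₂ z₀)ᵣ)²`, `[Q^r]₁ᵣ = [Q^r]ᵣ₁ = -(u₂ z₀)ᵣ` and `[Q^r]ᵣᵣ = 1`. -/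
def Qmat {s : ℕ} (z₀ : Fin s → ℝ) (r : MonIdx s) : Matrix (MonIdx s) (MonIdx s) ℝ :=
  Matrix.single (idx1 s) (idx1 s) ((u2 z₀ r) ^ 2)
    + Matrix.single (idx1 s) r (-(u2 z₀ r))
    + Matrix.single r (idx1 s) (-(u2 z₀ r))
    + Matrix.single r r 1

/-- Kronecker product of two vectors: `(v ⊗ u)_{(k,t)} = v_k u_t`. -/
def kron {K N : Type*} (v : K → ℝ) (u : N → ℝ) : K × N → ℝ := fun p => v p.1 * u p.2
/-- Extended polynomial variables: `Xe 0 = 1` and `Xe (i+1) = X i`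
(the convention `z₀ := 1`). -/
def Xe {s : ℕ} : Fin (s + 1) → MvPolynomial (Fin s) ℝ := Fin.cons 1 MvPolynomial.X

/-- Extended constants: `ce c 0 = 1` and `ce c (i+1) = c i` (the convention `c₀ := 1`). -/
def ce {s : ℕ} (c : Fin s → ℝ) : Fin (s + 1) → ℝ := Fin.cons 1 c

/-! The matrix `B = 1 - u₂(c) e₁ᵀ` sends every vector with first entry `1` to its difference with
`u₂(c)` and has rank `N - 1`, so `Q = BᵀB` turns the left-hand side into `‖u₂(z) - u₂(c)‖²`.
Each entry `z_i z_j - c_i c_j = z_i (z_j - c_j) + c_j (z_i - c_i)` of `u₂(z) - u₂(c)` is, by the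
degree-one certificates for `z_i - c_i`, a linear combination of the products `h_k(z) u₂(z)_t`,
and since `C` has a left inverse these are combinations of the entries of `h̄(z) ⊗ u₂(z)`.
Writing `u₂(z) - u₂(c) = V (h̄(z) ⊗ u₂(z))` gives `Ū = VᵀV`. -/

open MvPolynomial

section Centering

variable {ι : Type*} [Fintype ι] [DecidableEq ι]

/-- For `w i₀ = 1`, the projection onto `{u | u i₀ = 0}` along `w`. -/
def centering (i₀ : ι) (w : ι → ℝ) : Matrix ι ι ℝ :=
  1 - vecMulVec w (Pi.single i₀ 1)

lemma centering_mulVec (i₀ : ι) (w u : ι → ℝ) : centering i₀ w *ᵥ u = u - u i₀ • w := by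
  rw [centering, sub_mulVec, one_mulVec]
  ext r
  simp [vecMulVec, mulVec, dotProduct, Pi.single_apply, mul_comm]

lemma rank_centering (i₀ : ι) {w : ι → ℝ} (hw : w i₀ = 1) :
    (centering i₀ w).rank = Fintype.card ι - 1 := by
  have hrange : LinearMap.range (centering i₀ w).mulVecLin =
      LinearMap.ker (LinearMap.proj (R := ℝ) (φ := fun _ : ι => ℝ) i₀) := by
    ext y
    simp only [LinearMap.mem_range, mulVecLin_apply, centering_mulVec, LinearMap.mem_ker,
      LinearMap.proj_apply]
    constructor
    · rintro ⟨u, rfl⟩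
      simp [hw]
    · intro hy
      exact ⟨y, by simp [hy]⟩
  have hproj := LinearMap.finrank_range_add_finrank_ker
    (LinearMap.proj (R := ℝ) (φ := fun _ : ι => ℝ) i₀)
  rw [LinearMap.range_eq_top.mpr fun y => ⟨fun _ => y, rfl⟩, finrank_top, Module.finrank_pi,
    Module.finrank_self] at hproj
  rw [Matrix.rank, hrange]
  omega

end Centering

lemma dotProduct_transpose_mul_self_mulVec {m n : Type*} [Fintype m] [Fintype n]
    (A : Matrix m n ℝ) (x : n → ℝ) : x ⬝ᵥ ((Aᵀ * A) *ᵥ x) = (A *ᵥ x) ⬝ᵥ (A *ᵥ x) := by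
  rw [← mulVec_mulVec, dotProduct_mulVec, vecMul_transpose]

lemma posSemidef_transpose_mul_self {m n : Type*} [Fintype m] [Fintype n]
    (A : Matrix m n ℝ) : (Aᵀ * A).PosSemidef := by
  simpa using posSemidef_conjTranspose_mul_self A

lemma exists_mulVec_eq_of_forall_mem_span {X ι κ : Type*} [Fintype κ] (G : X → κ → ℝ)
    (f : X → ι → ℝ) (hf : ∀ r, (fun x => f x r) ∈ Submodule.span ℝ (Set.range fun p x => G x p)) :
    ∃ V : Matrix ι κ ℝ, ∀ x, V *ᵥ G x = f x := by
  choose V hV using fun r => (Submodule.mem_span_range_iff_exists_fun ℝ).mp (hf r)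
  refine ⟨V, fun x => funext fun r => ?_⟩
  simpa [mulVec, dotProduct, Finset.sum_apply] using congrFun (hV r) x

section KronSpan

variable {X κ τ : Type*}

def kronSpan (φ : X → κ → ℝ) (g : X → τ → ℝ) : Submodule ℝ (X → ℝ) :=
  Submodule.span ℝ (Set.range fun p : κ × τ => fun x => kron (φ x) (g x) p)

lemma mul_mem_kronSpan (φ : X → κ → ℝ) (g : X → τ → ℝ) (k : κ) (t : τ) :
    (fun x => φ x k * g x t) ∈ kronSpan φ g :=
  Submodule.subset_span ⟨(k, t), rfl⟩

lemma kronSpan_le_kronSpan_mulVec [Fintype κ] [DecidableEq κ] {ι : Type*} [Fintype ι]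
    (φ : X → κ → ℝ) (g : X → τ → ℝ) {C : Matrix ι κ ℝ} {D : Matrix κ ι ℝ} (hDC : D * C = 1) :
    kronSpan φ g ≤ kronSpan (fun x => C *ᵥ φ x) g := by
  refine Submodule.span_le.mpr ?_
  rintro _ ⟨⟨k, t⟩, rfl⟩
  have hφ : ∀ x, (D *ᵥ (C *ᵥ φ x)) k = φ x k := fun x => by
    rw [mulVec_mulVec, hDC, one_mulVec]
  have hsum : (fun x => kron (φ x) (g x) (k, t)) =
      ∑ j, D k j • fun x => (C *ᵥ φ x) j * g x t := by
    ext x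
    simp only [kron, Finset.sum_apply, Pi.smul_apply, smul_eq_mul]
    rw [← hφ x]
    simp only [mulVec, dotProduct, Finset.sum_mul, mul_assoc]
  change (fun x => kron (φ x) (g x) (k, t)) ∈ _
  rw [hsum]
  exact Submodule.sum_mem _ fun j _ => Submodule.smul_mem _ _ (mul_mem_kronSpan _ _ j t)

end KronSpan

section Monomials

variable {s : ℕ}

lemma u2_idx1 (z : Fin s → ℝ) : u2 z (idx1 s) = 1 := by
  simp [u2, idx1, extv]

lemma eval_Xe (z : Fin s → ℝ) (i : Fin (s + 1)) : eval z (Xe i) = extv z i := by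
  cases i using Fin.cases <;> simp [Xe, extv]

lemma exists_u2_eq_extv_mul (a b : Fin (s + 1)) : ∃ t, ∀ z, u2 z t = extv z a * extv z b := by
  rcases le_total a b with hab | hba
  · exact ⟨⟨(a, b), hab⟩, fun z => rfl⟩
  · exact ⟨⟨(b, a), hba⟩, fun z => mul_comm _ _⟩

lemma eval_mem_span_extv {p : MvPolynomial (Fin s) ℝ} (hp : p.totalDegree ≤ 1) :
    (fun z => eval z p) ∈ Submodule.span ℝ (Set.range fun b z => extv z b) := by
  have hsum : (fun z => eval z p) = ∑ d ∈ p.support, coeff d p • fun z => ∏ i, z i ^ d i := by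
    ext z
    simp [eval_eq', Finset.sum_apply]
  rw [hsum]
  refine Submodule.sum_mem _ fun d hd => Submodule.smul_mem _ _ ?_
  have hd1 : d.degree ≤ 1 := (le_totalDegree hd).trans hp
  rcases Nat.le_one_iff_eq_zero_or_eq_one.mp hd1 with h0 | h1
  · obtain rfl := (Finsupp.degree_eq_zero_iff d).mp h0
    exact Submodule.subset_span ⟨0, by ext z; simp [extv]⟩
  · obtain ⟨i, rfl⟩ : d ∈ Set.range fun i => Finsupp.single i 1 := by
      rw [Finsupp.range_single_one]; exact h1
    refine Submodule.subset_span ⟨i.succ, ?_⟩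
    ext z
    simp [extv, Finsupp.single_apply]

end Monomials

section Certificates

variable {s K : ℕ} {h : Fin K → MvPolynomial (Fin s) ℝ}

lemma exists_Xe_sub_C_eq_sum {c : Fin s → ℝ}
    (hlam : ∀ i : Fin s, ∃ lam : Fin K → MvPolynomial (Fin s) ℝ,
      (∀ k, (lam k).totalDegree ≤ 1) ∧ X i - C (c i) = ∑ k, lam k * h k)
    (i : Fin (s + 1)) : ∃ lam : Fin K → MvPolynomial (Fin s) ℝ,
      (∀ k, (lam k).totalDegree ≤ 1) ∧ Xe i - C (ce c i) = ∑ k, lam k * h k := by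
  cases i using Fin.cases with
  | zero => exact ⟨0, fun k => by simp, by simp [Xe, ce]⟩
  | succ i => simpa [Xe, ce] using hlam i

lemma extv_mul_eval_mul_mem_kronSpan (a : Fin (s + 1)) {lam : MvPolynomial (Fin s) ℝ}
    (hlam : lam.totalDegree ≤ 1) (k : Fin K) :
    (fun z => extv z a * eval z lam * eval z (h k)) ∈ kronSpan (fun z k => eval z (h k)) u2 := by
  obtain ⟨w, hw⟩ := (Submodule.mem_span_range_iff_exists_fun ℝ).mp (eval_mem_span_extv hlam)
  have hsum : (fun z => extv z a * eval z lam * eval z (h k)) =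
      ∑ b, w b • fun z => eval z (h k) * (extv z a * extv z b) := by
    ext z
    rw [← congrFun hw z]
    simp only [Finset.sum_apply, Pi.smul_apply, smul_eq_mul, Finset.mul_sum, Finset.sum_mul]
    exact Finset.sum_congr rfl fun b _ => by ring
  rw [hsum]
  refine Submodule.sum_mem _ fun b _ => Submodule.smul_mem _ _ ?_
  obtain ⟨t, ht⟩ := exists_u2_eq_extv_mul a b
  simp_rw [← ht]
  exact mul_mem_kronSpan _ _ k t

lemma u2_sub_u2_mem_kronSpan {c : Fin s → ℝ}
    (hlam : ∀ i : Fin s, ∃ lam : Fin K → MvPolynomial (Fin s) ℝ,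
      (∀ k, (lam k).totalDegree ≤ 1) ∧ X i - C (c i) = ∑ k, lam k * h k)
    (r : MonIdx s) : (fun z => u2 z r - u2 c r) ∈ kronSpan (fun z k => eval z (h k)) u2 := by
  obtain ⟨⟨i, j⟩, hij⟩ := r
  obtain ⟨li, hli, hi⟩ := exists_Xe_sub_C_eq_sum hlam i
  obtain ⟨lj, hlj, hj⟩ := exists_Xe_sub_C_eq_sum hlam j
  have hsum : (fun z => u2 z ⟨(i, j), hij⟩ - u2 c ⟨(i, j), hij⟩) =
      ∑ k, ((fun z => extv z i * eval z (lj k) * eval z (h k)) +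
        ce c j • fun z => extv z 0 * eval z (li k) * eval z (h k)) := by
    ext z
    have hevi := congrArg (eval z) hi
    have hevj := congrArg (eval z) hj
    simp only [map_sub, map_sum, map_mul, eval_C, eval_Xe] at hevi hevj
    calc extv z i * extv z j - ce c i * ce c j
        = extv z i * (extv z j - ce c j) + ce c j * (extv z i - ce c i) := by ring
      _ = _ := by
        rw [hevi, hevj]
        simp [Finset.sum_apply, Finset.mul_sum, Finset.sum_add_distrib, extv, mul_assoc]
  rw [hsum]
  exact Submodule.sum_mem _ fun k _ =>
    Submodule.add_mem _ (extv_mul_eval_mul_mem_kronSpan i (hlj k) k)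
      (Submodule.smul_mem _ _ (extv_mul_eval_mul_mem_kronSpan 0 (hli k) k))

end Certificates

theorem stmt18_general (s : ℕ) (c : Fin s → ℝ)
    (K : ℕ) (h : Fin K → MvPolynomial (Fin s) ℝ)
    (hlam : ∀ i : Fin s, ∃ lam : Fin K → MvPolynomial (Fin s) ℝ,
        (∀ k, (lam k).totalDegree ≤ 1) ∧
        MvPolynomial.X i - MvPolynomial.C (c i) = ∑ k, lam k * h k)
    (Kb : ℕ) (C : Matrix (Fin Kb) (Fin K) ℝ) (hC : IsUnit (Cᵀ * C)) :
    ∃ Q : Matrix (MonIdx s) (MonIdx s) ℝ, Q.PosSemidef ∧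
      Q.rank = Fintype.card (MonIdx s) - 1 ∧
      ∃ Ub : Matrix (Fin Kb × MonIdx s) (Fin Kb × MonIdx s) ℝ, Ub.PosSemidef ∧
        ∀ z : Fin s → ℝ,
          u2 z ⬝ᵥ (Q *ᵥ u2 z) - u2 c ⬝ᵥ (Q *ᵥ u2 c) =
            kron (C *ᵥ fun k => MvPolynomial.eval z (h k)) (u2 z) ⬝ᵥ
              (Ub *ᵥ kron (C *ᵥ fun k => MvPolynomial.eval z (h k)) (u2 z)) := by
  obtain ⟨D, hDC⟩ : ∃ D : Matrix (Fin K) (Fin Kb) ℝ, D * C = 1 :=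
    ⟨(Cᵀ * C)⁻¹ * Cᵀ, by rw [Matrix.mul_assoc, nonsing_inv_mul _ ((isUnit_iff_isUnit_det _).mp hC)]⟩
  obtain ⟨V, hV⟩ := exists_mulVec_eq_of_forall_mem_span
    (fun z => kron (C *ᵥ fun k => eval z (h k)) (u2 z)) (fun z => u2 z - u2 c)
    fun r => kronSpan_le_kronSpan_mulVec _ _ hDC (u2_sub_u2_mem_kronSpan hlam r)
  set B := centering (idx1 s) (u2 c)
  refine ⟨Bᵀ * B, posSemidef_transpose_mul_self B,
    by rw [rank_transpose_mul_self, rank_centering _ (u2_idx1 c)],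
    Vᵀ * V, posSemidef_transpose_mul_self V, fun z => ?_⟩
  simp only [dotProduct_transpose_mul_self_mulVec, B, centering_mulVec, u2_idx1, one_smul,
    sub_self, hV]
  simp

/-- under the hypotheses of STATEMENT 10, for any `C ∈ ℝ^{K̄×K}` with
`Cᵀ C` invertible and `h̄(z) = C h(z)`, there exist a PSD matrix `Q` of rank `N − 1`
and a PSD matrix `Ū` with
`u₂(z)ᵀ Q u₂(z) − u₂(c)ᵀ Q u₂(c) = (h̄(z) ⊗ u₂(z))ᵀ Ū (h̄(z) ⊗ u₂(z))` for all `z`. -/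
theorem stmt18 (s : ℕ) (hs : 1 ≤ s) (c : Fin s → ℝ) (hc : ∀ i, c i ≠ 0)
    (K : ℕ) (h : Fin K → MvPolynomial (Fin s) ℝ) (a b : Fin K → Fin (s + 1))
    (hform : ∀ k, h k = Xe (a k) * Xe (b k) - MvPolynomial.C (ce c (a k) * ce c (b k)))
    (hlam : ∀ i : Fin s, ∃ lam : Fin K → MvPolynomial (Fin s) ℝ,
        (∀ k, (lam k).totalDegree ≤ 1) ∧
        MvPolynomial.X i - MvPolynomial.C (c i) = ∑ k, lam k * h k)
    (Kb : ℕ) (C : Matrix (Fin Kb) (Fin K) ℝ) (hC : IsUnit (Cᵀ * C)) :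
    ∃ Q : Matrix (MonIdx s) (MonIdx s) ℝ, Q.PosSemidef ∧
      Q.rank = Fintype.card (MonIdx s) - 1 ∧
      ∃ Ub : Matrix (Fin Kb × MonIdx s) (Fin Kb × MonIdx s) ℝ, Ub.PosSemidef ∧
        ∀ z : Fin s → ℝ,
          u2 z ⬝ᵥ (Q *ᵥ u2 z) - u2 c ⬝ᵥ (Q *ᵥ u2 c) =
            kron (C *ᵥ fun k => MvPolynomial.eval z (h k)) (u2 z) ⬝ᵥ
              (Ub *ᵥ kron (C *ᵥ fun k => MvPolynomial.eval z (h k)) (u2 z)) :=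
  stmt18_general s c K h hlam Kb C hC
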